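/- arXiv:2202.11052 — 5 statements merged into one kernel-verified Lean document; each statement's English description precedes it below -/
import Mathlib

section
/- Let f : ℝⁿ → ℝ, x ∈ ℝⁿ, p ∈ ℝⁿ, and α > 0, γ > 0, L > 0, B > 0. Suppose the sufficient decrease property holds: f(x + αp) ≤ f(x) + α⟨∇f(x), p⟩ + L α² ‖p‖², suppose ‖p‖ ≤ B, and suppose f(x + αp) > f(x) − γα². Then α(LB² + γ) > −⟨∇f(x), p⟩. -/
open scoped RealInnerProductSpace

theorem stmt_0 {n : ℕ} (f : EuclideanSpace ℝ (Fin n) → ℝ)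
    (x p : EuclideanSpace ℝ (Fin n)) (α γ L B : ℝ)
    (hα : 0 < α) (hγ : 0 < γ) (hL : 0 < L) (hB : 0 < B)
    (hdec : f (x + α • p) ≤ f x + α * ⟪gradient f x, p⟫ + L * α ^ 2 * ‖p‖ ^ 2)
    (hpB : ‖p‖ ≤ B)
    (hfail : f (x + α • p) > f x - γ * α ^ 2) :
    α * (L * B ^ 2 + γ) > - ⟪gradient f x, p⟫ := by
  have hp : (0:ℝ) ≤ ‖p‖ := norm_nonneg p
  set g := ⟪gradient f x, p⟫ with hg
  have h1 : -(γ * α ^ 2) < α * g + L * α ^ 2 * ‖p‖ ^ 2 := by linarith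
  have h2 : α * (-g) < α * (γ * α + L * α * ‖p‖ ^ 2) := by ring_nf; ring_nf at h1; linarith
  have h3 : -g < γ * α + L * α * ‖p‖ ^ 2 := lt_of_mul_lt_mul_left h2 hα.le
  have h4 : ‖p‖ ^ 2 ≤ B ^ 2 := by nlinarith
  nlinarith [mul_pos hL hα]
end

section
/- Let f : ℝⁿ → ℝ be differentiable, bounded below by f_low, and let {x_k}, {α_k} be sequences with α_0 > 0, γ > 0, γ₁ ∈ (0,1), γ₂ ≥ 1, where at each step either (successful) f(x_{k+1}) ≤ f(x_k) − γα_k² and α_{k+1} = γ₂α_k, or (unsuccessful) x_{k+1} = x_k and α_{k+1} = γ₁α_k. Then α_k → 0. -/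
/-!
The values `f (x k)` decrease and are bounded below, so the per-step decrease of `f` tends to
zero. A successful step has `γ α_k² ≤ f (x k) - f (x (k + 1))`, hence `|α (k + 1)|` is at most
`|γ₂| √((f (x k) - f (x (k + 1))) / γ)`, a bound tending to zero; an unsuccessful step contracts
`|α|` by `γ₁ < 1`. A sequence driven by these two alternatives tends to zero.
-/

open Filter Topology

theorem Antitone.tendsto_sub_succ_of_bddBelow {u : ℕ → ℝ} (hu : Antitone u)
    (hbdd : BddBelow (Set.range u)) : Tendsto (fun k => u k - u (k + 1)) atTop (𝓝 0) := by
  have hlim := tendsto_atTop_ciInf hu hbdd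
  simpa using hlim.sub ((tendsto_add_atTop_iff_nat 1).2 hlim)

theorem tendsto_zero_of_le_max_mul {β e : ℕ → ℝ} {r : ℝ} (hβ : ∀ k, 0 ≤ β k)
    (he : Tendsto e atTop (𝓝 0)) (hr0 : 0 ≤ r) (hr1 : r < 1)
    (hstep : ∀ k, β (k + 1) ≤ max (e k) (r * β k)) : Tendsto β atTop (𝓝 0) := by
  refine tendsto_order.2 ⟨fun a ha => Eventually.of_forall fun k => ha.trans_le (hβ k),
    fun ε hε => ?_⟩
  obtain ⟨N, hN⟩ := eventually_atTop.1 (he.eventually (eventually_le_nhds (half_pos hε)))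
  have hbound : ∀ j, β (N + j) ≤ max (ε / 2) (r ^ j * β N) := by
    intro j
    induction j with
    | zero => simp
    | succ j ih =>
      calc β (N + (j + 1)) ≤ max (e (N + j)) (r * β (N + j)) := hstep (N + j)
        _ ≤ max (ε / 2) (r * max (ε / 2) (r ^ j * β N)) :=
          max_le_max (hN _ (Nat.le_add_right N j)) (mul_le_mul_of_nonneg_left ih hr0)
        _ ≤ max (ε / 2) (r ^ (j + 1) * β N) := by
          rw [mul_max_of_nonneg _ _ hr0, pow_succ', mul_assoc]
          refine max_le (le_max_left _ _) (max_le ?_ (le_max_right _ _))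
          exact (mul_le_of_le_one_left (half_pos hε).le hr1.le).trans (le_max_left _ _)
  have hpow : Tendsto (fun j => r ^ j * β N) atTop (𝓝 0) := by
    simpa using (tendsto_pow_atTop_nhds_zero_of_lt_one hr0 hr1).mul_const (β N)
  obtain ⟨J, hJ⟩ := eventually_atTop.1 (hpow.eventually (eventually_lt_nhds hε))
  refine eventually_atTop.2 ⟨N + J, fun k hk => ?_⟩
  obtain ⟨j, rfl⟩ := Nat.exists_eq_add_of_le (le_of_add_le_left hk)
  exact (hbound j).trans_lt (max_lt (half_lt_self hε) (hJ j (by omega)))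

theorem stmt_3_general {n : ℕ} (f : EuclideanSpace ℝ (Fin n) → ℝ) (f_low : ℝ)
    (hlow : ∀ y, f_low ≤ f y)
    (x : ℕ → EuclideanSpace ℝ (Fin n)) (α : ℕ → ℝ)
    (γ γ₁ γ₂ : ℝ) (hγ : 0 < γ) (hγ₁ : γ₁ ∈ Set.Ioo (0 : ℝ) 1)
    (hstep : ∀ k, (f (x (k + 1)) ≤ f (x k) - γ * (α k) ^ 2 ∧ α (k + 1) = γ₂ * α k) ∨
      (x (k + 1) = x k ∧ α (k + 1) = γ₁ * α k)) :
    Tendsto α atTop (nhds 0) := by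
  set decrease : ℕ → ℝ := fun k => f (x k) - f (x (k + 1))
  have hanti : Antitone (fun k => f (x k)) := antitone_nat_of_succ_le fun k => by
    rcases hstep k with ⟨hk, -⟩ | ⟨hk, -⟩
    · linarith [mul_nonneg hγ.le (sq_nonneg (α k))]
    · rw [hk]
  have hdecrease : Tendsto decrease atTop (𝓝 0) :=
    hanti.tendsto_sub_succ_of_bddBelow ⟨f_low, Set.forall_mem_range.2 fun k => hlow (x k)⟩
  have hbound : Tendsto (fun k => |γ₂| * √(decrease k / γ)) atTop (𝓝 0) := by
    have hsqrt := (Real.continuous_sqrt.tendsto _).comp (hdecrease.div_const γ)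
    simpa using hsqrt.const_mul |γ₂|
  rw [tendsto_zero_iff_abs_tendsto_zero]
  refine tendsto_zero_of_le_max_mul (β := fun k => |α k|) (fun k => abs_nonneg _) hbound
    hγ₁.1.le hγ₁.2 fun k => ?_
  rcases hstep k with ⟨hk, hα⟩ | ⟨-, hα⟩
  · have hαk : |α k| ≤ √(decrease k / γ) :=
      Real.abs_le_sqrt ((le_div_iff₀ hγ).2 (by simp only [decrease]; linarith))
    rw [hα, abs_mul]
    exact (mul_le_mul_of_nonneg_left hαk (abs_nonneg _)).trans (le_max_left _ _)
  · rw [hα, abs_mul, abs_of_pos hγ₁.1]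
    exact le_max_right _ _

theorem stmt_3 {n : ℕ} (f : EuclideanSpace ℝ (Fin n) → ℝ) (f_low : ℝ)
    (hf : Differentiable ℝ f) (hlow : ∀ y, f_low ≤ f y)
    (x : ℕ → EuclideanSpace ℝ (Fin n)) (α : ℕ → ℝ)
    (γ γ₁ γ₂ : ℝ) (hγ : 0 < γ) (hγ₁ : γ₁ ∈ Set.Ioo (0 : ℝ) 1) (hγ₂ : 1 ≤ γ₂)
    (hα0 : 0 < α 0)
    (hstep : ∀ k, (f (x (k + 1)) ≤ f (x k) - γ * (α k) ^ 2 ∧ α (k + 1) = γ₂ * α k) ∨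
      (x (k + 1) = x k ∧ α (k + 1) = γ₁ * α k)) :
    Tendsto α atTop (nhds 0) :=
  stmt_3_general f f_low hlow x α γ γ₁ γ₂ hγ hγ₁ hstep
end

section
/- Let f : ℝⁿ → ℝ be Lipschitz continuous, let y_k → x* in ℝⁿ, q_k → d with ‖d‖ = 1, t_k > 0 with t_k → 0, and γ > 0. Suppose for every k, f(y_k + t_k q_k) − f(y_k) > −γ t_k². Then the Clarke generalized directional derivative satisfies f°(x*, d) ≥ 0. -/
open Filter

/-- The Clarke generalized directional derivative. -/
noncomputable def clarkeDeriv {n : ℕ} (f : EuclideanSpace ℝ (Fin n) → ℝ)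
    (x v : EuclideanSpace ℝ (Fin n)) : ℝ :=
  limsup (fun p : EuclideanSpace ℝ (Fin n) × ℝ => (f (p.1 + p.2 • v) - f p.1) / p.2)
    ((nhds x) ×ˢ (nhdsWithin 0 (Set.Ioi 0)))

theorem stmt_7 {n : ℕ} (f : EuclideanSpace ℝ (Fin n) → ℝ) (K : NNReal)
    (hLip : LipschitzWith K f)
    (y q : ℕ → EuclideanSpace ℝ (Fin n)) (t : ℕ → ℝ)
    (xstar d : EuclideanSpace ℝ (Fin n)) (γ : ℝ) (hγ : 0 < γ)
    (hy : Tendsto y atTop (nhds xstar)) (hq : Tendsto q atTop (nhds d))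
    (hd : ‖d‖ = 1)
    (htpos : ∀ k, 0 < t k) (ht : Tendsto t atTop (nhds 0))
    (hfail : ∀ k, f (y k + t k • q k) - f (y k) > -γ * (t k) ^ 2) :
    clarkeDeriv f xstar d ≥ 0 := by
  set F := (nhds xstar) ×ˢ (nhdsWithin (0:ℝ) (Set.Ioi 0)) with hF
  set h : EuclideanSpace ℝ (Fin n) × ℝ → ℝ :=
    fun p => (f (p.1 + p.2 • d) - f p.1) / p.2 with hh
  -- bound |h| ≤ K on positive p.2
  have hbd : ∀ p : EuclideanSpace ℝ (Fin n) × ℝ, 0 < p.2 → |h p| ≤ K := by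
    intro p hp
    have h1 : |f (p.1 + p.2 • d) - f p.1| ≤ K * p.2 := by
      have := hLip.dist_le_mul (p.1 + p.2 • d) p.1
      rw [Real.dist_eq] at this
      have hdist : dist (p.1 + p.2 • d) p.1 = p.2 := by
        rw [dist_eq_norm]
        simp [norm_smul, hd, abs_of_pos hp]
      rw [hdist] at this
      exact this
    rw [hh, abs_div, abs_of_pos hp]
    rw [div_le_iff₀ hp]
    exact h1
  have hposF : ∀ᶠ p : EuclideanSpace ℝ (Fin n) × ℝ in F, 0 < p.2 :=
    Eventually.prod_inr self_mem_nhdsWithin _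
  have hboundF : ∀ᶠ p in F, |h p| ≤ K := hposF.mono fun p hp => hbd p hp
  -- the sequence
  set u : ℕ → EuclideanSpace ℝ (Fin n) × ℝ := fun k => (y k, t k) with hu
  have htsub : Tendsto t atTop (nhdsWithin 0 (Set.Ioi 0)) :=
    tendsto_nhdsWithin_of_tendsto_nhds_of_eventually_within t ht
      (Eventually.of_forall htpos)
  have htend : Tendsto u atTop F := hy.prodMk htsub
  -- lower bound along the sequence
  set c : ℕ → ℝ := fun k => -γ * t k - K * ‖q k - d‖ with hc
  have hkey : ∀ k, c k ≤ h (u k) := by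
    intro k
    have hLk : |f (y k + t k • d) - f (y k + t k • q k)| ≤ K * (t k * ‖q k - d‖) := by
      have := hLip.dist_le_mul (y k + t k • d) (y k + t k • q k)
      rw [Real.dist_eq] at this
      have hdist : dist (y k + t k • d) (y k + t k • q k) = t k * ‖q k - d‖ := by
        rw [dist_eq_norm]
        have : (y k + t k • d) - (y k + t k • q k) = t k • (d - q k) := by
          module
        rw [this, norm_smul, Real.norm_eq_abs, abs_of_pos (htpos k), norm_sub_rev]
      rw [hdist] at this
      exact this
    have h2 : f (y k + t k • d) - f (y k) ≥
        -γ * (t k)^2 - K * (t k * ‖q k - d‖) := by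
      have h3 := (abs_le.mp hLk).1
      have h4 := (hfail k).le
      linarith
    have h5 : (-γ * (t k)^2 - K * (t k * ‖q k - d‖)) / t k
        ≤ (f (y k + t k • d) - f (y k)) / t k := by
      gcongr
      exact (htpos k).le
    have h6 : (-γ * (t k)^2 - K * (t k * ‖q k - d‖)) / t k = c k := by
      field_simp [hc, (htpos k).ne']
      ring
    rw [h6] at h5
    exact h5
  have hc0 : Tendsto c atTop (nhds 0) := by
    have hq0 : Tendsto (fun k => ‖q k - d‖) atTop (nhds 0) := by
      have h7 : Tendsto (fun k => q k - d) atTop (nhds (d - d)) :=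
        hq.sub tendsto_const_nhds
      rw [sub_self] at h7
      simpa using h7.norm
    have : Tendsto (fun k => -γ * t k - K * ‖q k - d‖) atTop (nhds (-γ * 0 - K * 0)) :=
      (ht.const_mul (-γ)).sub (hq0.const_mul (K:ℝ))
    rw [show -γ * (0:ℝ) - (K:ℝ) * 0 = 0 by ring] at this
    exact this
  -- boundedness facts
  have hboundu : ∀ᶠ k in atTop, |h (u k)| ≤ K :=
    htend.eventually hboundF
  have hbu_above : IsBoundedUnder (· ≤ ·) atTop (h ∘ u) :=
    ⟨K, hboundu.mono fun k hk => (abs_le.mp hk).2⟩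
  have hbu_below : IsBoundedUnder (· ≥ ·) atTop (h ∘ u) :=
    ⟨-K, hboundu.mono fun k hk => (abs_le.mp hk).1⟩
  have hbF_above : IsBoundedUnder (· ≤ ·) F h :=
    ⟨K, hboundF.mono fun p hp => (abs_le.mp hp).2⟩
  -- 0 ≤ liminf (h ∘ u)
  have h0 : (0:ℝ) ≤ liminf (h ∘ u) atTop := by
    have hcl : liminf c atTop = 0 := hc0.liminf_eq
    have := liminf_le_liminf (Eventually.of_forall hkey)
      hc0.isBoundedUnder_ge hbu_above.isCoboundedUnder_ge
    rwa [hcl] at this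
  have h1 : liminf (h ∘ u) atTop ≤ limsup (h ∘ u) atTop :=
    liminf_le_limsup hbu_above hbu_below
  have h2 : limsup (h ∘ u) atTop ≤ limsup h F := by
    have hmap : map u atTop ≤ F := htend
    have := limsup_le_limsup_of_le hmap
      (hbu_below.isCoboundedUnder_le) hbF_above
    rwa [← limsup_comp] at this
  calc (0:ℝ) ≤ liminf (h ∘ u) atTop := h0
    _ ≤ limsup (h ∘ u) atTop := h1
    _ ≤ limsup h F := h2
end

section
/- Let f : ℝⁿ → ℝ be Lipschitz continuous and bounded below, let {d̄_k} be dense in the unit sphere of ℝⁿ, and consider the direct search iteration: x_{k+1} = x_k + α_k d̄_k and α_{k+1} = γ₂α_k if f(x_k + α_k d̄_k) ≤ f(x_k) − γα_k², otherwise x_{k+1} = x_k and α_{k+1} = γ₁α_k, with γ > 0, γ₁ ∈ (0,1), γ₂ ≥ 1, α_0 > 0. If a subsequence {x_{i(k)}} of unsuccessful iterates converges to x* and for every unit vector d there is a further subsequence with d̄_{j(i(k))} → d, then x* is Clarke stationary: f°(x*, d) ≥ 0 for every unit vector d. -/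
open Filter

open Topology

/-!
The step sizes go to zero: with `c = γ / (2 γ₂²)`, the quantity `f (x k) + c α_k²` decreases by at
least a fixed multiple of `α_k²` at every iteration and is bounded below, so `∑ α_k²` converges.
At an unsuccessful iterate, `f (x_k + α_k d̄_k) > f (x_k) - γ α_k²` and the Lipschitz bound give
`(f (x_k + α_k d) - f (x_k)) / α_k ≥ -γ α_k - K ‖d - d̄_k‖`; along the refining subsequence the
right-hand side tends to `0`, and the pairs `(x_k, α_k)` tend to `(x*, 0⁺)`, so the Clarke
derivative, a `limsup` along exactly that filter, is nonnegative.
-/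

theorem summable_of_le_sub_succ {Φ a : ℕ → ℝ} {L : ℝ} (ha : ∀ k, 0 ≤ a k)
    (hlow : ∀ k, L ≤ Φ k) (hdesc : ∀ k, Φ (k + 1) + a k ≤ Φ k) : Summable a := by
  refine summable_of_sum_range_le (c := Φ 0 - L) ha fun N => ?_
  calc ∑ k ∈ Finset.range N, a k ≤ ∑ k ∈ Finset.range N, (Φ k - Φ (k + 1)) :=
        Finset.sum_le_sum fun k _ => by linarith [hdesc k]
    _ = Φ 0 - Φ N := Finset.sum_range_sub' Φ N
    _ ≤ Φ 0 - L := by linarith [hlow N]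

section DirectSearch

variable {E : Type*} [SeminormedAddCommGroup E] [NormedSpace ℝ E]

theorem LipschitzWith.abs_div_le_mul_norm {f : E → ℝ} {K : NNReal} (hf : LipschitzWith K f)
    (y v : E) {t : ℝ} (ht : 0 < t) : |(f (y + t • v) - f y) / t| ≤ K * ‖v‖ := by
  rw [abs_div, abs_of_pos ht, div_le_iff₀ ht]
  calc |f (y + t • v) - f y| ≤ K * ‖y + t • v - y‖ := hf.norm_sub_le _ _
    _ = K * ‖v‖ * t := by rw [add_sub_cancel_left, norm_smul, Real.norm_of_nonneg ht.le]; ring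

theorem LipschitzWith.neg_mul_sub_le_div_of_lt {f : E → ℝ} {K : NNReal} (hf : LipschitzWith K f)
    {y v w : E} {t γ : ℝ} (ht : 0 < t) (hfail : f y - γ * t ^ 2 < f (y + t • w)) :
    -γ * t - K * ‖v - w‖ ≤ (f (y + t • v) - f y) / t := by
  have hvw : |f (y + t • w) - f (y + t • v)| ≤ K * ‖v - w‖ * t := by
    calc |f (y + t • w) - f (y + t • v)| ≤ K * ‖y + t • w - (y + t • v)‖ := hf.norm_sub_le _ _
      _ = K * ‖v - w‖ * t := by
        rw [add_sub_add_left_eq_sub, ← smul_sub, norm_smul, Real.norm_of_nonneg ht.le, norm_sub_rev]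
        ring
  rw [le_div_iff₀ ht]
  nlinarith [(abs_le.mp hvw).2]

def DirectSearchIterates (f : E → ℝ) (dbar x : ℕ → E) (α : ℕ → ℝ) (γ γ₁ γ₂ : ℝ) : Prop :=
  ∀ k, (f (x k + α k • dbar k) ≤ f (x k) - γ * (α k) ^ 2 ∧
        x (k + 1) = x k + α k • dbar k ∧ α (k + 1) = γ₂ * α k) ∨
      (f (x k + α k • dbar k) > f (x k) - γ * (α k) ^ 2 ∧
        x (k + 1) = x k ∧ α (k + 1) = γ₁ * α k)

variable {f : E → ℝ} {dbar x : ℕ → E} {α : ℕ → ℝ} {γ γ₁ γ₂ : ℝ}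

theorem stepSize_pos (hγ₁ : 0 < γ₁) (hγ₂ : 0 < γ₂) (hα0 : 0 < α 0)
    (hstep : DirectSearchIterates f dbar x α γ γ₁ γ₂) (k : ℕ) : 0 < α k := by
  induction k with
  | zero => exact hα0
  | succ k ih =>
    rcases hstep k with ⟨-, -, h⟩ | ⟨-, -, h⟩ <;> rw [h] <;> positivity

theorem exists_merit_descent (hγ : 0 < γ) (hγ₁ : γ₁ ∈ Set.Ioo (0 : ℝ) 1) (hγ₂ : 0 < γ₂)
    (hstep : DirectSearchIterates f dbar x α γ γ₁ γ₂) :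
    ∃ c > 0, ∃ δ > 0, ∀ k,
      f (x (k + 1)) + c * α (k + 1) ^ 2 + δ * α k ^ 2 ≤ f (x k) + c * α k ^ 2 := by
  obtain ⟨hγ₁0, hγ₁1⟩ := hγ₁
  have hc : γ / (2 * γ₂ ^ 2) * γ₂ ^ 2 = γ / 2 := by field_simp
  set c := γ / (2 * γ₂ ^ 2)
  have hshrink : 0 < c * (1 - γ₁ ^ 2) := mul_pos (by positivity) (by nlinarith)
  refine ⟨c, by positivity, min (γ / 2) (c * (1 - γ₁ ^ 2)), lt_min (by positivity) hshrink,
    fun k => ?_⟩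
  have hsq := sq_nonneg (α k)
  rcases hstep k with ⟨hf, hx, hα⟩ | ⟨-, hx, hα⟩
  · rw [hx, hα, mul_pow, ← mul_assoc, hc]
    nlinarith [mul_le_mul_of_nonneg_right (min_le_left (γ / 2) (c * (1 - γ₁ ^ 2))) hsq,
      mul_nonneg (show 0 < c by positivity).le hsq]
  · rw [hx, hα]
    nlinarith [mul_le_mul_of_nonneg_right (min_le_right (γ / 2) (c * (1 - γ₁ ^ 2))) hsq]

theorem tendsto_stepSize_zero {f_low : ℝ} (hlow : ∀ y, f_low ≤ f y) (hγ : 0 < γ)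
    (hγ₁ : γ₁ ∈ Set.Ioo (0 : ℝ) 1) (hγ₂ : 0 < γ₂) (hα0 : 0 < α 0)
    (hstep : DirectSearchIterates f dbar x α γ γ₁ γ₂) :
    Tendsto α atTop (𝓝[>] 0) := by
  have hpos := stepSize_pos hγ₁.1 hγ₂ hα0 hstep
  obtain ⟨c, hc, δ, hδ, hdesc⟩ := exists_merit_descent hγ hγ₁ hγ₂ hstep
  have hsum : Summable fun k => δ * α k ^ 2 :=
    summable_of_le_sub_succ (Φ := fun k => f (x k) + c * α k ^ 2) (L := f_low)
      (fun k => by positivity) (fun k => by nlinarith [hlow (x k), sq_nonneg (α k)]) hdesc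
  have hsq : Tendsto (fun k => α k ^ 2) atTop (𝓝 0) := by
    simpa [inv_mul_cancel_left₀ hδ.ne'] using hsum.tendsto_atTop_zero.const_mul δ⁻¹
  have hα : Tendsto α atTop (𝓝 0) := by
    simpa [Real.sqrt_sq (hpos _).le] using hsq.sqrt
  exact tendsto_nhdsWithin_iff.mpr ⟨hα, Eventually.of_forall hpos⟩

end DirectSearch

theorem le_clarkeDeriv_of_tendsto {n : ℕ} {f : EuclideanSpace ℝ (Fin n) → ℝ} {K : NNReal}
    (hf : LipschitzWith K f) {x₀ v : EuclideanSpace ℝ (Fin n)} {y : ℕ → EuclideanSpace ℝ (Fin n)}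
    {t b : ℕ → ℝ} {c : ℝ} (hy : Tendsto y atTop (𝓝 x₀)) (ht : Tendsto t atTop (𝓝[>] 0))
    (hb : Tendsto b atTop (𝓝 c)) (hq : ∀ᶠ k in atTop, b k ≤ (f (y k + t k • v) - f (y k)) / t k) :
    c ≤ clarkeDeriv f x₀ v := by
  set q := fun p : EuclideanSpace ℝ (Fin n) × ℝ => (f (p.1 + p.2 • v) - f p.1) / p.2
  set l := 𝓝 x₀ ×ˢ 𝓝[>] (0 : ℝ)
  have hyt : Tendsto (fun k => (y k, t k)) atTop l := hy.prodMk ht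
  have hqbound : ∀ᶠ p in l, |q p| ≤ K * ‖v‖ := by
    filter_upwards [tendsto_snd.eventually (self_mem_nhdsWithin (s := Set.Ioi (0 : ℝ)))]
      with p hp using hf.abs_div_le_mul_norm p.1 v hp
  have hqyt : ∀ᶠ k in atTop, |q (y k, t k)| ≤ K * ‖v‖ := hyt.eventually hqbound
  calc c = limsup b atTop := hb.limsup_eq.symm
    _ ≤ limsup (q ∘ fun k => (y k, t k)) atTop :=
        limsup_le_limsup hq hb.isBoundedUnder_ge.isCoboundedUnder_le
          ⟨_, hqyt.mono fun _ h => (abs_le.mp h).2⟩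
    _ ≤ limsup q l := by
        rw [limsup_comp]
        exact limsup_le_limsup_of_le hyt
          (IsBoundedUnder.isCoboundedUnder_le ⟨_, hqyt.mono fun _ h => (abs_le.mp h).1⟩)
          ⟨_, hqbound.mono fun _ h => (abs_le.mp h).2⟩

theorem stmt_8_general {n : ℕ} (f : EuclideanSpace ℝ (Fin n) → ℝ) (K : NNReal) (f_low : ℝ)
    (hLip : LipschitzWith K f) (hlow : ∀ y, f_low ≤ f y)
    (dbar : ℕ → EuclideanSpace ℝ (Fin n))
    (x : ℕ → EuclideanSpace ℝ (Fin n)) (α : ℕ → ℝ)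
    (γ γ₁ γ₂ : ℝ) (hγ : 0 < γ) (hγ₁ : γ₁ ∈ Set.Ioo (0 : ℝ) 1) (hγ₂ : 1 ≤ γ₂)
    (hα0 : 0 < α 0)
    (hstep : ∀ k,
      (f (x k + α k • dbar k) ≤ f (x k) - γ * (α k) ^ 2 ∧
        x (k + 1) = x k + α k • dbar k ∧ α (k + 1) = γ₂ * α k) ∨
      (f (x k + α k • dbar k) > f (x k) - γ * (α k) ^ 2 ∧
        x (k + 1) = x k ∧ α (k + 1) = γ₁ * α k))
    (i : ℕ → ℕ) (hi : StrictMono i)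
    (hunsucc : ∀ k, f (x (i k) + α (i k) • dbar (i k)) > f (x (i k)) - γ * (α (i k)) ^ 2)
    (xstar : EuclideanSpace ℝ (Fin n))
    (hconv : Tendsto (fun k => x (i k)) atTop (nhds xstar))
    (hrefine : ∀ d : EuclideanSpace ℝ (Fin n), ‖d‖ = 1 →
      ∃ j : ℕ → ℕ, StrictMono j ∧
        Tendsto (fun k => dbar (i (j k))) atTop (nhds d)) :
    ∀ d : EuclideanSpace ℝ (Fin n), ‖d‖ = 1 → clarkeDeriv f xstar d ≥ 0 := by
  intro d hd
  obtain ⟨j, hj, hdbar⟩ := hrefine d hd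
  have hα : Tendsto (fun k => α (i (j k))) atTop (𝓝[>] 0) :=
    (tendsto_stepSize_zero hlow hγ hγ₁ (by linarith) hα0 hstep).comp
      (hi.tendsto_atTop.comp hj.tendsto_atTop)
  have hbound : Tendsto (fun k => -γ * α (i (j k)) - K * ‖d - dbar (i (j k))‖) atTop (𝓝 0) := by
    simpa using ((tendsto_nhds_of_tendsto_nhdsWithin hα).const_mul (-γ)).sub
      (((tendsto_const_nhds (x := d)).sub hdbar).norm.const_mul (K : ℝ))
  exact le_clarkeDeriv_of_tendsto hLip (hconv.comp hj.tendsto_atTop) hα hbound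
    ((hα.eventually self_mem_nhdsWithin).mono fun k hk =>
      hLip.neg_mul_sub_le_div_of_lt hk (hunsucc (j k)))

theorem stmt_8 {n : ℕ} (f : EuclideanSpace ℝ (Fin n) → ℝ) (K : NNReal) (f_low : ℝ)
    (hLip : LipschitzWith K f) (hlow : ∀ y, f_low ≤ f y)
    (dbar : ℕ → EuclideanSpace ℝ (Fin n)) (hsph : ∀ k, ‖dbar k‖ = 1)
    (hdense : Metric.sphere (0 : EuclideanSpace ℝ (Fin n)) 1 ⊆ closure (Set.range dbar))
    (x : ℕ → EuclideanSpace ℝ (Fin n)) (α : ℕ → ℝ)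
    (γ γ₁ γ₂ : ℝ) (hγ : 0 < γ) (hγ₁ : γ₁ ∈ Set.Ioo (0 : ℝ) 1) (hγ₂ : 1 ≤ γ₂)
    (hα0 : 0 < α 0)
    (hstep : ∀ k,
      (f (x k + α k • dbar k) ≤ f (x k) - γ * (α k) ^ 2 ∧
        x (k + 1) = x k + α k • dbar k ∧ α (k + 1) = γ₂ * α k) ∨
      (f (x k + α k • dbar k) > f (x k) - γ * (α k) ^ 2 ∧
        x (k + 1) = x k ∧ α (k + 1) = γ₁ * α k))
    (i : ℕ → ℕ) (hi : StrictMono i)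
    (hunsucc : ∀ k, f (x (i k) + α (i k) • dbar (i k)) > f (x (i k)) - γ * (α (i k)) ^ 2)
    (xstar : EuclideanSpace ℝ (Fin n))
    (hconv : Tendsto (fun k => x (i k)) atTop (nhds xstar))
    (hrefine : ∀ d : EuclideanSpace ℝ (Fin n), ‖d‖ = 1 →
      ∃ j : ℕ → ℕ, StrictMono j ∧
        Tendsto (fun k => dbar (i (j k))) atTop (nhds d)) :
    ∀ d : EuclideanSpace ℝ (Fin n), ‖d‖ = 1 → clarkeDeriv f xstar d ≥ 0 :=
  stmt_8_general f K f_low hLip hlow dbar x α γ γ₁ γ₂ hγ hγ₁ hγ₂ hα0 hstep i hi hunsucc xstar hconv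
    hrefine
end

section
/- Let f : ℝⁿ → ℝ, x ∈ ℝⁿ, d ∈ ℝⁿ with ‖d‖ ≤ B, and suppose f satisfies the quadratic upper bound f(x + αd) ≤ f(x) + α⟨∇f(x), d⟩ + Lα²B² for all α > 0. Let γ, γ₁ ∈ (0,1), γ₂ > 1, and suppose α* > 0 is such that f(x + Δd) > f(x) − γΔ² where either Δ = α*/γ₁ or Δ = γ₂α*. Then in both cases, −⟨∇f(x), d⟩ < α*·(γ₂/γ₁)·(LB² + γ). -/
open scoped RealInnerProductSpace

theorem stmt_14 {n : ℕ} (f : EuclideanSpace ℝ (Fin n) → ℝ)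
    (x d : EuclideanSpace ℝ (Fin n)) (B L γ γ₁ γ₂ αstar : ℝ)
    (hB : 0 < B) (hL : 0 < L) (hd : ‖d‖ ≤ B)
    (hquad : ∀ α : ℝ, 0 < α →
      f (x + α • d) ≤ f x + α * ⟪gradient f x, d⟫ + L * α ^ 2 * B ^ 2)
    (hγ : γ ∈ Set.Ioo (0 : ℝ) 1) (hγ₁ : γ₁ ∈ Set.Ioo (0 : ℝ) 1) (hγ₂ : 1 < γ₂)
    (hαstar : 0 < αstar)
    (hfail : ∃ Δ : ℝ, (Δ = αstar / γ₁ ∨ Δ = γ₂ * αstar) ∧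
      f (x + Δ • d) > f x - γ * Δ ^ 2) :
    - ⟪gradient f x, d⟫ < αstar * (γ₂ / γ₁) * (L * B ^ 2 + γ) := by
  obtain ⟨Δ, hΔcase, hfΔ⟩ := hfail
  obtain ⟨hγ0, hγ1⟩ := hγ
  obtain ⟨hγ₁0, hγ₁1⟩ := hγ₁
  have hΔpos : 0 < Δ := by
    rcases hΔcase with h | h <;> subst h <;> positivity
  have hq := hquad Δ hΔpos
  -- from failed test: -⟪g,d⟫ < Δ * (L*B^2 + γ)
  have key : - ⟪gradient f x, d⟫ < Δ * (L * B ^ 2 + γ) := by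
    nlinarith [sq_nonneg Δ]
  have hΔle : Δ ≤ αstar * (γ₂ / γ₁) := by
    rcases hΔcase with h | h <;> subst h
    · rw [div_le_iff₀ hγ₁0, mul_assoc, div_mul_cancel₀ _ hγ₁0.ne']
      nlinarith
    · rw [← mul_div_assoc, le_div_iff₀ hγ₁0]
      nlinarith
  have hpos : 0 < L * B ^ 2 + γ := by positivity
  calc - ⟪gradient f x, d⟫ < Δ * (L * B ^ 2 + γ) := key
    _ ≤ αstar * (γ₂ / γ₁) * (L * B ^ 2 + γ) := by
        exact mul_le_mul_of_nonneg_right hΔle hpos.le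
end
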